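/- (Minimal principal-minor assignment conditions for n = 4) Let A be an assignment of a real number A_S to every nonempty subset S ⊆ {1,2,3,4}, satisfying A_{ij} < A_i·A_j for all pairs of distinct i, j ∈ {1,2,3,4}. For distinct p,q,r define c_{pqr} = A_{pqr} − A_pA_{qr} − A_qA_{pr} − A_rA_{pq} + 2A_pA_qA_r. Then there exists a symmetric real 4×4 matrix à with det Ã_S = A_S for every nonempty S ⊆ {1,2,3,4} if and only if the following five equations hold: (1) c₁₂₃² = 4(A₁A₂ − A₁₂)(A₂A₃ − A₂₃)(A₁A₃ − A₁₃); (2) c₁₂₄² = 4(A₁A₂ − A₁₂)(A₂A₄ − A₂₄)(A₁A₄ − A₁₄); (3) c₁₃₄² = 4(A₁A₃ − A₁₃)(A₃A₄ − A₃₄)(A₁A₄ − A₁₄); (4) c₁₂₃c₁₂₄c₁₃₄ = 4(A₁A₂ − A₁₂)(A₁A₃ − A₁₃)(A₁A₄ − A₁₄)·c₂₃₄; (5) A₁₂₃₄ = −(1/2)[ c₁₂₃c₁₂₄/(A₁A₂ − A₁₂) + c₁₂₃c₁₃₄/(A₁A₃ − A₁₃) + c₁₂₃c₂₃₄/(A₂A₃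 − A₂₃) ] + A₁c₂₃₄ + A₂c₁₃₄ + A₃c₁₂₄ + A₄c₁₂₃ − 2A₁A₂A₃A₄ + A₁₂A₃₄ + A₁₃A₂₄ + A₁₄A₂₃. -/

import Mathlib

open Matrix

open Matrix

lemma det_sub (S : Finset (Fin 4)) {k : ℕ} (e : Fin k ≃ {x // x ∈ S})
    (M : Matrix (Fin 4) (Fin 4) ℝ) :
    (M.submatrix (fun i : {x // x ∈ S} => (i : Fin 4))
                 (fun i : {x // x ∈ S} => (i : Fin 4))).det
      = (M.submatrix (fun i => ((e i : Fin 4))) (fun i => ((e i : Fin 4)))).det := by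
  rw [← Matrix.det_submatrix_equiv_self e]; rfl

lemma my_det_fin_four (A : Matrix (Fin 4) (Fin 4) ℝ) : A.det =
    A 0 0*A 1 1*A 2 2*A 3 3 - A 0 0*A 1 1*A 2 3*A 3 2 - A 0 0*A 1 2*A 2 1*A 3 3 + A 0 0*A 1 2*A 2 3*A 3 1 + A 0 0*A 1 3*A 2 1*A 3 2 - A 0 0*A 1 3*A 2 2*A 3 1 - A 0 1*A 1 0*A 2 2*A 3 3 + A 0 1*A 1 0*A 2 3*A 3 2 + A 0 1*A 1 2*A 2 0*A 3 3 - A 0 1*A 1 2*A 2 3*A 3 0 - A 0 1*A 1 3*A 2 0*A 3 2 + A 0 1*A 1 3*A 2 2*A 3 0 + A 0 2*A 1 0*A 2 1*A 3 3 - A 0 2*A 1 0*A 2 3*A 3 1 - A 0 2*A 1 1*A 2 0*A 3 3 + A 0 2*A 1 1*A 2 3*A 3 0 + A 0 2*A 1 3*A 2 0*A 3 1 - A 0 2*A 1 3*A 2 1*A 3 0 - A 0 3*A 1 0*A 2 1*A 3 2 + A 0 3*A 1 0*A 2 2*A 3 1 + A 0 3*A 1 1*A 2 0*A 3 2 - A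 0 3*A 1 1*A 2 2*A 3 0 - A 0 3*A 1 2*A 2 0*A 3 1 + A 0 3*A 1 2*A 2 1*A 3 0 := by
  rw [Matrix.det_succ_row_zero]
  simp [Fin.sum_univ_succ, Matrix.det_fin_three, Fin.succAbove,
    show Fin.succ 2 = (3:Fin 4) from rfl, show Fin.castSucc 2 = (2:Fin 4) from rfl,
    show ((1:Fin 4) < 3) from by decide]
  ring



set_option maxHeartbeats 1000000 in
/-- Minimal necessary and sufficient conditions for a 15-dimensional vector `A` (indexed by
the nonempty subsets of `{1,2,3,4}`, with `A_{ij} < A_i A_j`) to be the vector of principal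
minors of a symmetric real 4×4 matrix (indices `0,1,2,3` standing for `1,2,3,4`). -/
theorem stmt_19
    (A : Finset (Fin 4) → ℝ)
    (hstrict : ∀ i j : Fin 4, i ≠ j → A {i, j} < A {i} * A {j})
    (c : Fin 4 → Fin 4 → Fin 4 → ℝ)
    (hc : ∀ p q r : Fin 4, c p q r =
      A {p, q, r} - A {p} * A {q, r} - A {q} * A {p, r} - A {r} * A {p, q}
        + 2 * A {p} * A {q} * A {r}) :
    (∃ M : Matrix (Fin 4) (Fin 4) ℝ, M.IsSymm ∧
      ∀ S : Finset (Fin 4), S.Nonempty →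
        (M.submatrix (fun i : {x // x ∈ S} => (i : Fin 4))
                     (fun i : {x // x ∈ S} => (i : Fin 4))).det = A S)
    ↔
    ((c 0 1 2) ^ 2 =
        4 * (A {0} * A {1} - A {0, 1}) * (A {1} * A {2} - A {1, 2})
          * (A {0} * A {2} - A {0, 2}) ∧
      (c 0 1 3) ^ 2 =
        4 * (A {0} * A {1} - A {0, 1}) * (A {1} * A {3} - A {1, 3})
          * (A {0} * A {3} - A {0, 3}) ∧
      (c 0 2 3) ^ 2 =
        4 * (A {0} * A {2} - A {0, 2}) * (A {2} * A {3} - A {2, 3})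
          * (A {0} * A {3} - A {0, 3}) ∧
      c 0 1 2 * c 0 1 3 * c 0 2 3 =
        4 * (A {0} * A {1} - A {0, 1}) * (A {0} * A {2} - A {0, 2})
          * (A {0} * A {3} - A {0, 3}) * c 1 2 3 ∧
      A {0, 1, 2, 3} =
        -(1 / 2) * (c 0 1 2 * c 0 1 3 / (A {0} * A {1} - A {0, 1})
          + c 0 1 2 * c 0 2 3 / (A {0} * A {2} - A {0, 2})
          + c 0 1 2 * c 1 2 3 / (A {1} * A {2} - A {1, 2}))
        + A {0} * c 1 2 3 + A {1} * c 0 2 3 + A {2} * c 0 1 3 + A {3} * c 0 1 2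
        - 2 * A {0} * A {1} * A {2} * A {3}
        + A {0, 1} * A {2, 3} + A {0, 2} * A {1, 3} + A {0, 3} * A {1, 2}) := by
  constructor
  · rintro ⟨M, hsym, h⟩
    have hsy : ∀ i j, M j i = M i j := fun i j => hsym.apply i j
    have V0 := h {0} (by decide)
    rw [det_sub _ (Equiv.ofBijective ![⟨0, by decide⟩] (by decide)), Matrix.det_fin_one] at V0
    simp only [Matrix.submatrix_apply, Equiv.ofBijective_apply, Matrix.cons_val_zero, Matrix.cons_val_one, Matrix.cons_val_two, Matrix.cons_val_three, Matrix.head_cons, Matrix.tail_cons] at V0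
    have V1 := h {1} (by decide)
    rw [det_sub _ (Equiv.ofBijective ![⟨1, by decide⟩] (by decide)), Matrix.det_fin_one] at V1
    simp only [Matrix.submatrix_apply, Equiv.ofBijective_apply, Matrix.cons_val_zero, Matrix.cons_val_one, Matrix.cons_val_two, Matrix.cons_val_three, Matrix.head_cons, Matrix.tail_cons] at V1
    have V2 := h {2} (by decide)
    rw [det_sub _ (Equiv.ofBijective ![⟨2, by decide⟩] (by decide)), Matrix.det_fin_one] at V2
    simp only [Matrix.submatrix_apply, Equiv.ofBijective_apply, Matrix.cons_val_zero, Matrix.cons_val_one, Matrix.cons_val_two, Matrix.cons_val_three, Matrix.head_cons, Matrix.tail_cons] at V2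
    have V3 := h {3} (by decide)
    rw [det_sub _ (Equiv.ofBijective ![⟨3, by decide⟩] (by decide)), Matrix.det_fin_one] at V3
    simp only [Matrix.submatrix_apply, Equiv.ofBijective_apply, Matrix.cons_val_zero, Matrix.cons_val_one, Matrix.cons_val_two, Matrix.cons_val_three, Matrix.head_cons, Matrix.tail_cons] at V3
    have V01 := h {0, 1} (by decide)
    rw [det_sub _ (Equiv.ofBijective ![⟨0, by decide⟩, ⟨1, by decide⟩] (by decide)), Matrix.det_fin_two] at V01
    simp only [Matrix.submatrix_apply, Equiv.ofBijective_apply, Matrix.cons_val_zero, Matrix.cons_val_one, Matrix.cons_val_two, Matrix.cons_val_three, Matrix.head_cons, Matrix.tail_cons] at V01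
    have V02 := h {0, 2} (by decide)
    rw [det_sub _ (Equiv.ofBijective ![⟨0, by decide⟩, ⟨2, by decide⟩] (by decide)), Matrix.det_fin_two] at V02
    simp only [Matrix.submatrix_apply, Equiv.ofBijective_apply, Matrix.cons_val_zero, Matrix.cons_val_one, Matrix.cons_val_two, Matrix.cons_val_three, Matrix.head_cons, Matrix.tail_cons] at V02
    have V03 := h {0, 3} (by decide)
    rw [det_sub _ (Equiv.ofBijective ![⟨0, by decide⟩, ⟨3, by decide⟩] (by decide)), Matrix.det_fin_two] at V03
    simp only [Matrix.submatrix_apply, Equiv.ofBijective_apply, Matrix.cons_val_zero, Matrix.cons_val_one, Matrix.cons_val_two, Matrix.cons_val_three, Matrix.head_cons, Matrix.tail_cons] at V03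
    have V12 := h {1, 2} (by decide)
    rw [det_sub _ (Equiv.ofBijective ![⟨1, by decide⟩, ⟨2, by decide⟩] (by decide)), Matrix.det_fin_two] at V12
    simp only [Matrix.submatrix_apply, Equiv.ofBijective_apply, Matrix.cons_val_zero, Matrix.cons_val_one, Matrix.cons_val_two, Matrix.cons_val_three, Matrix.head_cons, Matrix.tail_cons] at V12
    have V13 := h {1, 3} (by decide)
    rw [det_sub _ (Equiv.ofBijective ![⟨1, by decide⟩, ⟨3, by decide⟩] (by decide)), Matrix.det_fin_two] at V13
    simp only [Matrix.submatrix_apply, Equiv.ofBijective_apply, Matrix.cons_val_zero, Matrix.cons_val_one, Matrix.cons_val_two, Matrix.cons_val_three, Matrix.head_cons, Matrix.tail_cons] at V13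
    have V23 := h {2, 3} (by decide)
    rw [det_sub _ (Equiv.ofBijective ![⟨2, by decide⟩, ⟨3, by decide⟩] (by decide)), Matrix.det_fin_two] at V23
    simp only [Matrix.submatrix_apply, Equiv.ofBijective_apply, Matrix.cons_val_zero, Matrix.cons_val_one, Matrix.cons_val_two, Matrix.cons_val_three, Matrix.head_cons, Matrix.tail_cons] at V23
    have V012 := h {0, 1, 2} (by decide)
    rw [det_sub _ (Equiv.ofBijective ![⟨0, by decide⟩, ⟨1, by decide⟩, ⟨2, by decide⟩] (by decide)), Matrix.det_fin_three] at V012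
    simp only [Matrix.submatrix_apply, Equiv.ofBijective_apply, Matrix.cons_val_zero, Matrix.cons_val_one, Matrix.cons_val_two, Matrix.cons_val_three, Matrix.head_cons, Matrix.tail_cons] at V012
    have V013 := h {0, 1, 3} (by decide)
    rw [det_sub _ (Equiv.ofBijective ![⟨0, by decide⟩, ⟨1, by decide⟩, ⟨3, by decide⟩] (by decide)), Matrix.det_fin_three] at V013
    simp only [Matrix.submatrix_apply, Equiv.ofBijective_apply, Matrix.cons_val_zero, Matrix.cons_val_one, Matrix.cons_val_two, Matrix.cons_val_three, Matrix.head_cons, Matrix.tail_cons] at V013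
    have V023 := h {0, 2, 3} (by decide)
    rw [det_sub _ (Equiv.ofBijective ![⟨0, by decide⟩, ⟨2, by decide⟩, ⟨3, by decide⟩] (by decide)), Matrix.det_fin_three] at V023
    simp only [Matrix.submatrix_apply, Equiv.ofBijective_apply, Matrix.cons_val_zero, Matrix.cons_val_one, Matrix.cons_val_two, Matrix.cons_val_three, Matrix.head_cons, Matrix.tail_cons] at V023
    have V123 := h {1, 2, 3} (by decide)
    rw [det_sub _ (Equiv.ofBijective ![⟨1, by decide⟩, ⟨2, by decide⟩, ⟨3, by decide⟩] (by decide)), Matrix.det_fin_three] at V123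
    simp only [Matrix.submatrix_apply, Equiv.ofBijective_apply, Matrix.cons_val_zero, Matrix.cons_val_one, Matrix.cons_val_two, Matrix.cons_val_three, Matrix.head_cons, Matrix.tail_cons] at V123
    have V0123 := h {0, 1, 2, 3} (by decide)
    rw [det_sub _ (Equiv.ofBijective ![⟨0, by decide⟩, ⟨1, by decide⟩, ⟨2, by decide⟩, ⟨3, by decide⟩] (by decide)), my_det_fin_four] at V0123
    simp only [Matrix.submatrix_apply, Equiv.ofBijective_apply, Matrix.cons_val_zero, Matrix.cons_val_one, Matrix.cons_val_two, Matrix.cons_val_three, Matrix.head_cons, Matrix.tail_cons] at V0123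
    simp only [hsy 0 1, hsy 0 2, hsy 0 3, hsy 1 2, hsy 1 3, hsy 2 3] at V01 V02 V03 V12 V13 V23 V012 V013 V023 V123 V0123
    refine ⟨?_, ?_, ?_, ?_, ?_⟩
    · rw [hc 0 1 2]
      simp only [← V012, ← V12, ← V02, ← V01, ← V0, ← V1, ← V2]
      ring
    · rw [hc 0 1 3]
      simp only [← V013, ← V13, ← V03, ← V01, ← V0, ← V1, ← V3]
      ring
    · rw [hc 0 2 3]
      simp only [← V023, ← V23, ← V03, ← V02, ← V0, ← V2, ← V3]
      ring
    · rw [hc 0 1 2, hc 0 1 3, hc 0 2 3, hc 1 2 3]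
      simp only [← V012, ← V013, ← V023, ← V123, ← V01, ← V02, ← V03, ← V12, ← V13, ← V23, ← V0, ← V1, ← V2, ← V3]
      ring
    · have hne01 : A {0} * A {1} - A {0, 1} ≠ 0 := ne_of_gt (sub_pos.mpr (hstrict 0 1 (by decide)))
      have hne02 : A {0} * A {2} - A {0, 2} ≠ 0 := ne_of_gt (sub_pos.mpr (hstrict 0 2 (by decide)))
      have hne12 : A {1} * A {2} - A {1, 2} ≠ 0 := ne_of_gt (sub_pos.mpr (hstrict 1 2 (by decide)))
      rw [hc 0 1 2, hc 0 1 3, hc 0 2 3, hc 1 2 3]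
      field_simp
      simp only [← V0123, ← V012, ← V013, ← V023, ← V123, ← V01, ← V02, ← V03, ← V12, ← V13, ← V23, ← V0, ← V1, ← V2, ← V3]
      ring
  · rintro ⟨h1, h2, h3, h4, h5⟩
    have d01 : (0:ℝ) < A {0} * A {1} - A {0, 1} := sub_pos.mpr (hstrict 0 1 (by decide))
    have d02 : (0:ℝ) < A {0} * A {2} - A {0, 2} := sub_pos.mpr (hstrict 0 2 (by decide))
    have d03 : (0:ℝ) < A {0} * A {3} - A {0, 3} := sub_pos.mpr (hstrict 0 3 (by decide))
    have d12 : (0:ℝ) < A {1} * A {2} - A {1, 2} := sub_pos.mpr (hstrict 1 2 (by decide))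
    have d13 : (0:ℝ) < A {1} * A {3} - A {1, 3} := sub_pos.mpr (hstrict 1 3 (by decide))
    have d23 : (0:ℝ) < A {2} * A {3} - A {2, 3} := sub_pos.mpr (hstrict 2 3 (by decide))
    obtain ⟨m01, hm01⟩ : ∃ x : ℝ, x = Real.sqrt (A {0} * A {1} - A {0, 1}) := ⟨_, rfl⟩
    obtain ⟨m02, hm02⟩ : ∃ x : ℝ, x = Real.sqrt (A {0} * A {2} - A {0, 2}) := ⟨_, rfl⟩
    obtain ⟨m03, hm03⟩ : ∃ x : ℝ, x = Real.sqrt (A {0} * A {3} - A {0, 3}) := ⟨_, rfl⟩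
    have sq01 : m01 ^ 2 = A {0} * A {1} - A {0, 1} := by rw [hm01]; exact Real.sq_sqrt d01.le
    have sq02 : m02 ^ 2 = A {0} * A {2} - A {0, 2} := by rw [hm02]; exact Real.sq_sqrt d02.le
    have sq03 : m03 ^ 2 = A {0} * A {3} - A {0, 3} := by rw [hm03]; exact Real.sq_sqrt d03.le
    have ne01 : m01 ≠ 0 := by rw [hm01]; exact ne_of_gt (Real.sqrt_pos.mpr d01)
    have ne02 : m02 ≠ 0 := by rw [hm02]; exact ne_of_gt (Real.sqrt_pos.mpr d02)
    have ne03 : m03 ≠ 0 := by rw [hm03]; exact ne_of_gt (Real.sqrt_pos.mpr d03)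
    obtain ⟨w12, hw12⟩ : ∃ x : ℝ, x = c 0 1 2 / (2 * m01 * m02) := ⟨_, rfl⟩
    obtain ⟨w13, hw13⟩ : ∃ x : ℝ, x = c 0 1 3 / (2 * m01 * m03) := ⟨_, rfl⟩
    obtain ⟨w23, hw23⟩ : ∃ x : ℝ, x = c 0 2 3 / (2 * m02 * m03) := ⟨_, rfl⟩
    have sq12 : w12 ^ 2 = A {1} * A {2} - A {1, 2} := by
      rw [hw12, div_pow, h1, ← sq01, ← sq02]; field_simp; ring
    have sq13 : w13 ^ 2 = A {1} * A {3} - A {1, 3} := by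
      rw [hw13, div_pow, h2, ← sq01, ← sq03]; field_simp; ring
    have sq23 : w23 ^ 2 = A {2} * A {3} - A {2, 3} := by
      rw [hw23, div_pow, h3, ← sq02, ← sq03]; field_simp; ring
    have prod012 : 2 * m01 * m02 * w12 = c 0 1 2 := by rw [hw12]; field_simp
    have prod013 : 2 * m01 * m03 * w13 = c 0 1 3 := by rw [hw13]; field_simp
    have prod023 : 2 * m02 * m03 * w23 = c 0 2 3 := by rw [hw23]; field_simp
    have h4' : c 0 1 2 * c 0 1 3 * c 0 2 3 = 4 * m01 ^ 2 * m02 ^ 2 * m03 ^ 2 * c 1 2 3 := by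
      rw [h4, ← sq01, ← sq02, ← sq03]
    have prod123 : 2 * (w12 * w13 * w23) = c 1 2 3 := by
      rw [hw12, hw13, hw23]; field_simp; linear_combination h4'
    have neW12 : w12 ≠ 0 := by
      intro h0; rw [h0] at sq12; simp at sq12; linarith
    have eA01 : A {0, 1} = A {0} * A {1} - m01 ^ 2 := by linarith
    have eA02 : A {0, 2} = A {0} * A {2} - m02 ^ 2 := by linarith
    have eA03 : A {0, 3} = A {0} * A {3} - m03 ^ 2 := by linarith
    have eA12 : A {1, 2} = A {1} * A {2} - w12 ^ 2 := by linarith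
    have eA13 : A {1, 3} = A {1} * A {3} - w13 ^ 2 := by linarith
    have eA23 : A {2, 3} = A {2} * A {3} - w23 ^ 2 := by linarith
    refine ⟨!![A {0}, m01, m02, m03; m01, A {1}, w12, w13; m02, w12, A {2}, w23; m03, w13, w23, A {3}],
      Matrix.IsSymm.ext fun i j => by fin_cases i <;> fin_cases j <;> rfl, ?_⟩
    intro S hS
    have hid : S = {0} ∨ S = {1} ∨ S = {2} ∨ S = {3} ∨ S = {0,1} ∨ S = {0,2} ∨ S = {0,3}
        ∨ S = {1,2} ∨ S = {1,3} ∨ S = {2,3} ∨ S = {0,1,2} ∨ S = {0,1,3} ∨ S = {0,2,3}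
        ∨ S = {1,2,3} ∨ S = {0,1,2,3} := by
      fin_cases S
      · simp at hS
      all_goals decide
    clear hS
    rcases hid with rfl|rfl|rfl|rfl|rfl|rfl|rfl|rfl|rfl|rfl|rfl|rfl|rfl|rfl|rfl
    · rw [det_sub _ (Equiv.ofBijective ![⟨0, by decide⟩] (by decide)), Matrix.det_fin_one]
      simp only [Matrix.submatrix_apply, Equiv.ofBijective_apply, Matrix.cons_val_zero, Matrix.cons_val_one, Matrix.cons_val_two, Matrix.cons_val_three, Matrix.head_cons, Matrix.tail_cons, Matrix.of_apply, Matrix.cons_val']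

    · rw [det_sub _ (Equiv.ofBijective ![⟨1, by decide⟩] (by decide)), Matrix.det_fin_one]
      simp only [Matrix.submatrix_apply, Equiv.ofBijective_apply, Matrix.cons_val_zero, Matrix.cons_val_one, Matrix.cons_val_two, Matrix.cons_val_three, Matrix.head_cons, Matrix.tail_cons, Matrix.of_apply, Matrix.cons_val']

    · rw [det_sub _ (Equiv.ofBijective ![⟨2, by decide⟩] (by decide)), Matrix.det_fin_one]
      simp only [Matrix.submatrix_apply, Equiv.ofBijective_apply, Matrix.cons_val_zero, Matrix.cons_val_one, Matrix.cons_val_two, Matrix.cons_val_three, Matrix.head_cons, Matrix.tail_cons, Matrix.of_apply, Matrix.cons_val']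

    · rw [det_sub _ (Equiv.ofBijective ![⟨3, by decide⟩] (by decide)), Matrix.det_fin_one]
      simp only [Matrix.submatrix_apply, Equiv.ofBijective_apply, Matrix.cons_val_zero, Matrix.cons_val_one, Matrix.cons_val_two, Matrix.cons_val_three, Matrix.head_cons, Matrix.tail_cons, Matrix.of_apply, Matrix.cons_val']

    · rw [det_sub _ (Equiv.ofBijective ![⟨0, by decide⟩, ⟨1, by decide⟩] (by decide)), Matrix.det_fin_two]
      simp only [Matrix.submatrix_apply, Equiv.ofBijective_apply, Matrix.cons_val_zero, Matrix.cons_val_one, Matrix.cons_val_two, Matrix.cons_val_three, Matrix.head_cons, Matrix.tail_cons, Matrix.of_apply, Matrix.cons_val']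
      linear_combination -sq01
    · rw [det_sub _ (Equiv.ofBijective ![⟨0, by decide⟩, ⟨2, by decide⟩] (by decide)), Matrix.det_fin_two]
      simp only [Matrix.submatrix_apply, Equiv.ofBijective_apply, Matrix.cons_val_zero, Matrix.cons_val_one, Matrix.cons_val_two, Matrix.cons_val_three, Matrix.head_cons, Matrix.tail_cons, Matrix.of_apply, Matrix.cons_val']
      linear_combination -sq02
    · rw [det_sub _ (Equiv.ofBijective ![⟨0, by decide⟩, ⟨3, by decide⟩] (by decide)), Matrix.det_fin_two]
      simp only [Matrix.submatrix_apply, Equiv.ofBijective_apply, Matrix.cons_val_zero, Matrix.cons_val_one, Matrix.cons_val_two, Matrix.cons_val_three, Matrix.head_cons, Matrix.tail_cons, Matrix.of_apply, Matrix.cons_val']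
      linear_combination -sq03
    · rw [det_sub _ (Equiv.ofBijective ![⟨1, by decide⟩, ⟨2, by decide⟩] (by decide)), Matrix.det_fin_two]
      simp only [Matrix.submatrix_apply, Equiv.ofBijective_apply, Matrix.cons_val_zero, Matrix.cons_val_one, Matrix.cons_val_two, Matrix.cons_val_three, Matrix.head_cons, Matrix.tail_cons, Matrix.of_apply, Matrix.cons_val']
      linear_combination -sq12
    · rw [det_sub _ (Equiv.ofBijective ![⟨1, by decide⟩, ⟨3, by decide⟩] (by decide)), Matrix.det_fin_two]
      simp only [Matrix.submatrix_apply, Equiv.ofBijective_apply, Matrix.cons_val_zero, Matrix.cons_val_one, Matrix.cons_val_two, Matrix.cons_val_three, Matrix.head_cons, Matrix.tail_cons, Matrix.of_apply, Matrix.cons_val']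
      linear_combination -sq13
    · rw [det_sub _ (Equiv.ofBijective ![⟨2, by decide⟩, ⟨3, by decide⟩] (by decide)), Matrix.det_fin_two]
      simp only [Matrix.submatrix_apply, Equiv.ofBijective_apply, Matrix.cons_val_zero, Matrix.cons_val_one, Matrix.cons_val_two, Matrix.cons_val_three, Matrix.head_cons, Matrix.tail_cons, Matrix.of_apply, Matrix.cons_val']
      linear_combination -sq23
    · rw [det_sub _ (Equiv.ofBijective ![⟨0, by decide⟩, ⟨1, by decide⟩, ⟨2, by decide⟩] (by decide)), Matrix.det_fin_three]
      simp only [Matrix.submatrix_apply, Equiv.ofBijective_apply, Matrix.cons_val_zero, Matrix.cons_val_one, Matrix.cons_val_two, Matrix.cons_val_three, Matrix.head_cons, Matrix.tail_cons, Matrix.of_apply, Matrix.cons_val']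
      linear_combination (hc 0 1 2) + prod012 - A {0} * sq12 - A {1} * sq02 - A {2} * sq01
    · rw [det_sub _ (Equiv.ofBijective ![⟨0, by decide⟩, ⟨1, by decide⟩, ⟨3, by decide⟩] (by decide)), Matrix.det_fin_three]
      simp only [Matrix.submatrix_apply, Equiv.ofBijective_apply, Matrix.cons_val_zero, Matrix.cons_val_one, Matrix.cons_val_two, Matrix.cons_val_three, Matrix.head_cons, Matrix.tail_cons, Matrix.of_apply, Matrix.cons_val']
      linear_combination (hc 0 1 3) + prod013 - A {0} * sq13 - A {1} * sq03 - A {3} * sq01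
    · rw [det_sub _ (Equiv.ofBijective ![⟨0, by decide⟩, ⟨2, by decide⟩, ⟨3, by decide⟩] (by decide)), Matrix.det_fin_three]
      simp only [Matrix.submatrix_apply, Equiv.ofBijective_apply, Matrix.cons_val_zero, Matrix.cons_val_one, Matrix.cons_val_two, Matrix.cons_val_three, Matrix.head_cons, Matrix.tail_cons, Matrix.of_apply, Matrix.cons_val']
      linear_combination (hc 0 2 3) + prod023 - A {0} * sq23 - A {2} * sq03 - A {3} * sq02
    · rw [det_sub _ (Equiv.ofBijective ![⟨1, by decide⟩, ⟨2, by decide⟩, ⟨3, by decide⟩] (by decide)), Matrix.det_fin_three]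
      simp only [Matrix.submatrix_apply, Equiv.ofBijective_apply, Matrix.cons_val_zero, Matrix.cons_val_one, Matrix.cons_val_two, Matrix.cons_val_three, Matrix.head_cons, Matrix.tail_cons, Matrix.of_apply, Matrix.cons_val']
      linear_combination (hc 1 2 3) + prod123 - A {1} * sq23 - A {2} * sq13 - A {3} * sq12
    · rw [det_sub _ (Equiv.ofBijective ![⟨0, by decide⟩, ⟨1, by decide⟩, ⟨2, by decide⟩, ⟨3, by decide⟩] (by decide)), my_det_fin_four]
      simp only [Matrix.submatrix_apply, Equiv.ofBijective_apply, Matrix.cons_val_zero, Matrix.cons_val_one, Matrix.cons_val_two, Matrix.cons_val_three, Matrix.head_cons, Matrix.tail_cons, Matrix.of_apply, Matrix.cons_val']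
      rw [h5, show A {0} * A {1} - A {0, 1} = m01 ^ 2 from sq01.symm,
        show A {0} * A {2} - A {0, 2} = m02 ^ 2 from sq02.symm,
        show A {1} * A {2} - A {1, 2} = w12 ^ 2 from sq12.symm,
        ← prod012, ← prod013, ← prod023, ← prod123, eA01, eA02, eA03, eA12, eA13, eA23]
      field_simp
      ring
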